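/- arXiv:1406.2060 — 5 statements merged into one kernel-verified Lean document; each statement's English description precedes it below -/
import Mathlib

section
/- A polymonad on exactly the two functors {R, Id} whose bind set corresponds to the natural transformations {η : Id∘Id ⇒ R, μ : R∘R ⇒ R, id_R : R∘Id ⇒ R, id_Id : Id∘Id ⇒ Id} gives rise to a monad (R, η, μ). In particular, the polymonad Associativity law implies the monad left unit law μ ∘ (η R) = id, the right unit law μ ∘ (R η) = id, and monad associativity μ ∘ (μ R) = μ ∘ (R μ). -/
open CategoryTheory

universe v u

/-- A categorical polymonad: a set of endofunctors containing the identity functor,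
and a set of joins `μ : M N ⇒ P` (natural transformations `N ⋙ M ⟶ P`,
i.e. with `M` applied outermost), satisfying the Identity, Diamond and
Associativity laws. -/
structure CatPolymonad (C : Type u) [Category.{v} C] where
  F : Set (C ⥤ C)
  J : ∀ M N P : C ⥤ C, Set ((N ⋙ M) ⟶ P)
  id_mem : 𝟭 C ∈ F
  id_join_left : ∀ M ∈ F, (Functor.leftUnitor M).hom ∈ J M (𝟭 C) M
  id_join_right : ∀ M ∈ F, (Functor.rightUnitor M).hom ∈ J (𝟭 C) M M
  diamond : ∀ R S T W : C ⥤ C, R ∈ F → S ∈ F → T ∈ F → W ∈ F →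
    ((∃ U ∈ F, (∃ j, j ∈ J R S U) ∧ (∃ j, j ∈ J U T W)) ↔
     (∃ V ∈ F, (∃ j, j ∈ J S T V) ∧ (∃ j, j ∈ J R V W)))
  assoc : ∀ (R S T U V W : C ⥤ C),
    ∀ μ1 ∈ J R S U, ∀ μ2 ∈ J U T W, ∀ μ3 ∈ J S T V, ∀ μ4 ∈ J R V W,
      Functor.whiskerLeft T μ1 ≫ μ2 = Functor.whiskerRight μ3 R ≫ μ4

/-!
Each monad law is one instance of the polymonad associativity square. For the unit laws, the
square pairs the joins `η, μ` with the identity joins `id_R`, whose side of the square collapses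
to the identity of `R`; monad associativity is the square with all four joins equal to `μ`.
-/

namespace CatPolymonad

variable {C : Type u} [Category.{v} C] (P : CatPolymonad C) {R : C ⥤ C}
  {η : (𝟭 C ⋙ 𝟭 C) ⟶ R} {μ : (R ⋙ R) ⟶ R}

theorem left_unit (hR : R ∈ P.F) (hη : η ∈ P.J (𝟭 C) (𝟭 C) R) (hμ : μ ∈ P.J R R R) :
    (Functor.rightUnitor R).inv ≫
      Functor.whiskerLeft R ((Functor.leftUnitor (𝟭 C)).inv ≫ η) ≫ μ = 𝟙 R := by
  have square := P.assoc _ _ _ _ _ _ η hη μ hμ _ (P.id_join_right R hR) _ (P.id_join_right R hR)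
  rw [Functor.whiskerLeft_comp, Category.assoc, square]
  ext X
  simp

theorem right_unit (hR : R ∈ P.F) (hη : η ∈ P.J (𝟭 C) (𝟭 C) R) (hμ : μ ∈ P.J R R R) :
    (Functor.leftUnitor R).inv ≫
      Functor.whiskerRight ((Functor.leftUnitor (𝟭 C)).inv ≫ η) R ≫ μ = 𝟙 R := by
  have square := P.assoc _ _ _ _ _ _ _ (P.id_join_left R hR) _ (P.id_join_left R hR) η hη μ hμ
  rw [Functor.whiskerRight_comp, Category.assoc, ← square]
  ext X
  simp

theorem mul_assoc (hμ : μ ∈ P.J R R R) :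
    Functor.whiskerLeft R μ ≫ μ = Functor.whiskerRight μ R ≫ μ :=
  P.assoc _ _ _ _ _ _ μ hμ μ hμ μ hμ μ hμ

end CatPolymonad

theorem polymonad_gives_monad_general {C : Type u} [Category.{v} C] (P : CatPolymonad C)
    (R : C ⥤ C) (hF : P.F = {R, 𝟭 C})
    (η : (𝟭 C ⋙ 𝟭 C) ⟶ R) (μ : (R ⋙ R) ⟶ R)
    (hη : η ∈ P.J (𝟭 C) (𝟭 C) R) (hμ : μ ∈ P.J R R R) :
    ((Functor.rightUnitor R).inv ≫
        Functor.whiskerLeft R ((Functor.leftUnitor (𝟭 C)).inv ≫ η) ≫ μ = 𝟙 R) ∧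
    ((Functor.leftUnitor R).inv ≫
        Functor.whiskerRight ((Functor.leftUnitor (𝟭 C)).inv ≫ η) R ≫ μ = 𝟙 R) ∧
    (Functor.whiskerLeft R μ ≫ μ = Functor.whiskerRight μ R ≫ μ) := by
  have hR : R ∈ P.F := hF ▸ Set.mem_insert R _
  exact ⟨P.left_unit hR hη hμ, P.right_unit hR hη hμ, P.mul_assoc hμ⟩

/-- A polymonad on `{R, Id}` whose joins are exactly
`{η : Id Id ⇒ R, μ : R R ⇒ R, id_R : R Id ⇒ R, id_Id : Id Id ⇒ Id}`
gives rise to a monad `(R, η, μ)`: the monad left unit, right unit and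
associativity laws hold. -/
theorem polymonad_gives_monad {C : Type u} [Category.{v} C] (P : CatPolymonad C)
    (R : C ⥤ C) (hF : P.F = {R, 𝟭 C})
    (η : (𝟭 C ⋙ 𝟭 C) ⟶ R) (μ : (R ⋙ R) ⟶ R)
    (hη : η ∈ P.J (𝟭 C) (𝟭 C) R) (hμ : μ ∈ P.J R R R)
    (hJ : ∀ M N Q : C ⥤ C, P.J M N Q =
      { j : (N ⋙ M) ⟶ Q |
        HEq j η ∨ HEq j μ ∨ HEq j (Functor.leftUnitor R).hom ∨
        HEq j (Functor.leftUnitor (𝟭 C)).hom }) :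
    ((Functor.rightUnitor R).inv ≫
        Functor.whiskerLeft R ((Functor.leftUnitor (𝟭 C)).inv ≫ η) ≫ μ = 𝟙 R) ∧
    ((Functor.leftUnitor R).inv ≫
        Functor.whiskerRight ((Functor.leftUnitor (𝟭 C)).inv ≫ η) R ≫ μ = 𝟙 R) ∧
    (Functor.whiskerLeft R μ ≫ μ = Functor.whiskerRight μ R ≫ μ) :=
  polymonad_gives_monad_general P R hF η μ hη hμ
end

section
/- Morphism–unit coherence law for polymonads: in any polymonad, for all units unit1 : a → M a (from a bind (Id,Id) ▷ M), unit2 : a → N a (from a bind (Id,Id) ▷ N), and any lift : M a → N a (defined as lift x = b x (λy.y) from a bind b : (M,Id) ▷ N in Σ), it holds that lift (unit1 e) = unit2 e for all e. -/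
universe u

abbrev IdC : Type u → Type u := fun a => a

abbrev PBind (M N P : Type u → Type u) : Type (u+1) :=
  ∀ (a b : Type u), M a → (a → N b) → P b

/-- A polymonad: a collection of unary type constructors containing `IdC`,
together with a collection of bind operators satisfying the polymonad laws. -/
structure Polymonad : Type (u+2) where
  Mem : Set (Type u → Type u)
  Sig : ∀ M N P : Type u → Type u, Set (PBind M N P)
  id_mem : IdC ∈ Mem
  functor : ∀ M ∈ Mem, ∃ b ∈ Sig M IdC M, ∀ (a : Type u) (m : M a), b a a m (fun y => y) = m
  paired_iff : ∀ M N : Type u → Type u, (∃ b, b ∈ Sig M IdC N) ↔ (∃ b, b ∈ Sig IdC M N)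
  paired_eq : ∀ (M N : Type u → Type u), ∀ b1 ∈ Sig M IdC N, ∀ b2 ∈ Sig IdC M N,
    ∀ (a b : Type u) (v : a) (f : a → M b),
      b1 b b (f v) (fun y => y) = b2 a b v f
  diamond : ∀ M N R T : Type u → Type u, M ∈ Mem → N ∈ Mem → R ∈ Mem → T ∈ Mem →
    ((∃ P ∈ Mem, (∃ b, b ∈ Sig M N P) ∧ (∃ b, b ∈ Sig P R T)) ↔
     (∃ S ∈ Mem, (∃ b, b ∈ Sig N R S) ∧ (∃ b, b ∈ Sig M S T)))
  assoc : ∀ (M N P R S T : Type u → Type u),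
    ∀ b1 ∈ Sig M N P, ∀ b2 ∈ Sig P R T, ∀ b3 ∈ Sig N R S, ∀ b4 ∈ Sig M S T,
    ∀ (a b c : Type u) (m : M a) (f : a → N b) (g : b → R c),
      b2 b c (b1 a b m f) g = b4 a c m (fun x => b3 b c (f x) g)
  closure : ∀ (M N P S T U : Type u → Type u),
    (∃ b, b ∈ Sig M N P) → (∃ b, b ∈ Sig S IdC M) →
    (∃ b, b ∈ Sig T IdC N) → (∃ b, b ∈ Sig P IdC U) →
    (∃ b, b ∈ Sig S T U)

/-- Morphism–unit coherence: `lift (unit1 e) = unit2 e`. -/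
theorem polymonad_morphism_unit (P : Polymonad.{u}) (M N : Type u → Type u)
    (bu1 : PBind IdC IdC M) (hu1 : bu1 ∈ P.Sig IdC IdC M)
    (bu2 : PBind IdC IdC N) (hu2 : bu2 ∈ P.Sig IdC IdC N)
    (bl : PBind M IdC N) (hl : bl ∈ P.Sig M IdC N) :
    ∀ (a : Type u) (e : a),
      bl a a (bu1 a a e (fun y => y)) (fun y => y) = bu2 a a e (fun y => y) := by
  intro a e
  obtain ⟨b3, hb3, hb3id⟩ := P.functor IdC P.id_mem
  have h := P.assoc IdC IdC M IdC IdC N bu1 hu1 bl hl b3 hb3 bu2 hu2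
    a a a e (fun y => y) (fun y => y)
  simp only [hb3id] at h
  exact h
end

section
/- Uniqueness of joins in a polymonad: if a polymonad (in the categorical sense) contains two joins μ1 : M N ⇒ P and μ2 : M N ⇒ P between the same composite M N and functor P, then μ1 = μ2. -/
open CategoryTheory

universe v u

theorem polymonad_join_unique_general {C : Type u} [Category.{v} C] (P : CatPolymonad C)
    (M N Q : C ⥤ C) (hM : M ∈ P.F) (hN : N ∈ P.F)
    (μ1 μ2 : (N ⋙ M) ⟶ Q) (h1 : μ1 ∈ P.J M N Q) (h2 : μ2 ∈ P.J M N Q) :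
    μ1 = μ2 := by
  -- Associativity for `M · 𝟭 · N`, with the identity joins `M 𝟭 ⇒ M` and `𝟭 N ⇒ N` inside,
  -- reads `𝟙 ≫ μ2 = 𝟙 ≫ μ1` since the unitors are identities.
  have h := P.assoc M (𝟭 C) N M N Q _ (P.id_join_left M hM) μ2 h2 _ (P.id_join_right N hN) μ1 h1
  ext X
  simpa using (NatTrans.congr_app h X).symm

/-- Uniqueness of joins: two joins `μ1, μ2 : M N ⇒ P` in a polymonad are equal. -/
theorem polymonad_join_unique {C : Type u} [Category.{v} C] (P : CatPolymonad C)
    (M N Q : C ⥤ C) (hM : M ∈ P.F) (hN : N ∈ P.F) (hQ : Q ∈ P.F)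
    (μ1 μ2 : (N ⋙ M) ⟶ Q) (h1 : μ1 ∈ P.J M N Q) (h2 : μ2 ∈ P.J M N Q) :
    μ1 = μ2 :=
  polymonad_join_unique_general P M N Q hM hN μ1 μ2 h1 h2
end

section
/- Every polymonad induces an effectoid: given a polymonad with functor set 𝓜 and bind set Σ, define E = 𝓜, U = {M | (Id,Id) ▷ M ∈ Σ}, M ≤ N iff (M,Id) ▷ N ∈ Σ, and (M;N) ↦ P iff (M,N) ▷ P ∈ Σ. Then (E, U, ≤, ↦) satisfies all six effectoid conditions. -/
universe u

/-- Every polymonad induces an effectoid: with `E = 𝓜`,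
`U = {M | (Id,Id)▷M ∈ Σ}`, `M ≤ N ↔ (M,Id)▷N ∈ Σ`, `(M;N)↦P ↔ (M,N)▷P ∈ Σ`,
the six effectoid conditions hold. -/
theorem polymonad_effectoid (P : Polymonad.{u}) :
    let U : (Type u → Type u) → Prop := fun M => ∃ b, b ∈ P.Sig IdC IdC M
    let le : (Type u → Type u) → (Type u → Type u) → Prop :=
      fun M N => ∃ b, b ∈ P.Sig M IdC N
    let tri : (Type u → Type u) → (Type u → Type u) → (Type u → Type u) → Prop :=
      fun M N Q => ∃ b, b ∈ P.Sig M N Q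
    (∀ e1 ∈ P.Mem, ∀ e2 ∈ P.Mem, (le e1 e2 ↔ ∃ u ∈ P.Mem, U u ∧ tri u e1 e2)) ∧
    (∀ e1 ∈ P.Mem, ∀ e2 ∈ P.Mem, (le e1 e2 ↔ ∃ u ∈ P.Mem, U u ∧ tri e1 u e2)) ∧
    (∀ e1 ∈ P.Mem, ∀ e2 ∈ P.Mem, ∀ e3 ∈ P.Mem, ∀ e4 ∈ P.Mem,
      ((∃ e ∈ P.Mem, tri e1 e2 e ∧ tri e e3 e4) ↔
       (∃ e' ∈ P.Mem, tri e2 e3 e' ∧ tri e1 e' e4))) ∧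
    (∀ e ∈ P.Mem, le e e) ∧
    (∀ u ∈ P.Mem, ∀ e ∈ P.Mem, U u → le u e → U e) ∧
    (∀ e1 ∈ P.Mem, ∀ e2 ∈ P.Mem, ∀ e3 ∈ P.Mem, ∀ e4 ∈ P.Mem,
      tri e1 e2 e3 → le e3 e4 → tri e1 e2 e4) := by

  intro U le tri
  have refl : ∀ M ∈ P.Mem, ∃ b, b ∈ P.Sig M IdC M := by
    intro M hM
    obtain ⟨b, hb, -⟩ := P.functor M hM
    exact ⟨b, hb⟩
  have idid : ∃ b, b ∈ P.Sig IdC IdC IdC := refl IdC P.id_mem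
  refine ⟨?_, ?_, ?_, ?_, ?_, ?_⟩
  · intro e1 h1 e2 h2
    constructor
    · intro h
      exact ⟨IdC, P.id_mem, idid, (P.paired_iff e1 e2).mp h⟩
    · rintro ⟨u, -, hu, huT⟩
      exact (P.paired_iff e1 e2).mpr
        (P.closure u e1 e2 IdC e1 e2 huT hu (refl e1 h1) (refl e2 h2))
  · intro e1 h1 e2 h2
    constructor
    · intro h
      exact ⟨IdC, P.id_mem, idid, h⟩
    · rintro ⟨u, -, hu, huT⟩
      exact P.closure e1 u e2 e1 IdC e2 huT (refl e1 h1) hu (refl e2 h2)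
  · intro e1 h1 e2 h2 e3 h3 e4 h4
    exact P.diamond e1 e2 e3 e4 h1 h2 h3 h4
  · intro e he
    exact refl e he
  · intro u hu e he hU hle
    exact P.closure IdC IdC u IdC IdC e hU idid idid hle
  · intro e1 h1 e2 h2 e3 h3 e4 h4 hT hle
    exact P.closure e1 e2 e3 e1 e2 e4 hT (refl e1 h1) (refl e2 h2) hle
end

section
/- In the effectoid induced by a polymonad, the identity laws hold: (∃L, L ∈ U and (L;M) ↦ M') iff M ≤ M'. In the forward direction, given constraints (L,M) ▷ M' and (Id,Id) ▷ L in Σ, the Functor, Closure, and Paired morphisms laws yield a bind (M,Id) ▷ M' in Σ. Conversely, M ≤ M' (i.e., (M,Id) ▷ M' ∈ Σ) implies Id ∈ U and (Id,M) ▷ M' ∈ Σ. -/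
universe u

/-- Effectoid identity law: `(∃ L ∈ U, (L;M) ↦ M') ↔ M ≤ M'`, and conversely
`M ≤ M'` implies `Id ∈ U` and `(Id,M) ▷ M' ∈ Σ`. -/
theorem polymonad_effectoid_identity (P : Polymonad.{u}) (M M' : Type u → Type u)
    (hM : M ∈ P.Mem) (hM' : M' ∈ P.Mem) :
    ((∃ L ∈ P.Mem, (∃ b, b ∈ P.Sig IdC IdC L) ∧ (∃ b, b ∈ P.Sig L M M')) ↔
      (∃ b, b ∈ P.Sig M IdC M')) ∧
    ((∃ b, b ∈ P.Sig M IdC M') →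
      (∃ b, b ∈ P.Sig IdC IdC IdC) ∧ (∃ b, b ∈ P.Sig IdC M M')) := by
  have hIdId : ∃ b, b ∈ P.Sig IdC IdC IdC := by
    obtain ⟨b, hb, _⟩ := P.functor IdC P.id_mem
    exact ⟨b, hb⟩
  have hMM : ∃ b, b ∈ P.Sig M IdC M := by
    obtain ⟨b, hb, _⟩ := P.functor M hM
    exact ⟨b, hb⟩
  have hM'M' : ∃ b, b ∈ P.Sig M' IdC M' := by
    obtain ⟨b, hb, _⟩ := P.functor M' hM'
    exact ⟨b, hb⟩
  constructor
  · constructor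
    · rintro ⟨L, _, hL, hLM⟩
      exact (P.paired_iff M M').mpr (P.closure L M M' IdC M M' hLM hL hMM hM'M')
    · intro h
      exact ⟨IdC, P.id_mem, hIdId, (P.paired_iff M M').mp h⟩
  · intro h
    exact ⟨hIdId, (P.paired_iff M M').mp h⟩
end
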